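/- arXiv:0711.3677 — 4 statements merged into one kernel-verified Lean document; each statement's English description precedes it below -/
import Mathlib

section
/- Let SW be the graph obtained by subdividing each edge of the star K_{1,3} exactly once. Then the P_3-graph of SW is isomorphic to the cycle C_6. -/
/-- A 3-vertex path (P₃) of a simple graph `G`: a middle vertex together with an
unordered pair of distinct ends, each adjacent to the middle vertex.
This identifies the path `a-b-c` with `c-b-a`. -/
@[ext]
structure P3Path {V : Type*} (G : SimpleGraph V) where
  mid : V
  ends : Sym2 V
  not_diag : ¬ ends.IsDiag
  adj : ∀ x ∈ ends, G.Adj mid x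

/-- The `P₃`-graph of `G`: two 3-vertex paths are adjacent iff their union is a
path on 4 vertices or a cycle on 3 vertices; equivalently, the middle vertex of
each is an end of the other. -/
def P3Graph {V : Type*} (G : SimpleGraph V) : SimpleGraph (P3Path G) where
  Adj p q := p ≠ q ∧ q.mid ∈ p.ends ∧ p.mid ∈ q.ends
  symm := ⟨fun p q h => ⟨Ne.symm h.1, h.2.2, h.2.1⟩⟩
  loopless := ⟨fun p h => h.1 rfl⟩

/-- The subdivided star `SW`: `K_{1,3}` with each edge subdivided once.
Center `0`; middle vertices `1,2,3`; leaves `4,5,6`. -/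
def SW : SimpleGraph (Fin 7) :=
  SimpleGraph.fromEdgeSet {s(0,1), s(0,2), s(0,3), s(1,4), s(2,5), s(3,6)}

/-!
A 3-vertex path of `SW` has its middle vertex at the centre `0` (one path for each of the three
pairs of spokes) or at a spoke vertex `b` (the single path `0 - b - a`). The path `0 - b - a`
is adjacent exactly to the two centre paths through `b`, so listing the paths alternately as
centre and spoke paths closes up into a 6-cycle.
-/

namespace P3Path

variable {V : Type*}

def equivSubtype (G : SimpleGraph V) :
    P3Path G ≃ {p : V × Sym2 V // ¬ p.2.IsDiag ∧ ∀ x ∈ p.2, G.Adj p.1 x} where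
  toFun p := ⟨(p.mid, p.ends), p.not_diag, p.adj⟩
  invFun p := ⟨p.1.1, p.1.2, p.2.1, p.2.2⟩

instance {G : SimpleGraph V} [DecidableEq V] : DecidableEq (P3Path G) :=
  (equivSubtype G).decidableEq

instance {G : SimpleGraph V} [Fintype V] [DecidableEq V] [DecidableRel G.Adj] :
    Fintype (P3Path G) :=
  Fintype.ofEquiv _ (equivSubtype G).symm

end P3Path

instance {V : Type*} (G : SimpleGraph V) [DecidableEq V] : DecidableRel (P3Graph G).Adj :=
  fun p q => inferInstanceAs (Decidable (p ≠ q ∧ q.mid ∈ p.ends ∧ p.mid ∈ q.ends))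

namespace SW

instance : DecidableRel SW.Adj := by unfold SW; infer_instance

def cyclicP3Path : Fin 6 → P3Path SW :=
  ![⟨0, s(1,2), by decide, by decide⟩,
    ⟨2, s(0,5), by decide, by decide⟩,
    ⟨0, s(2,3), by decide, by decide⟩,
    ⟨3, s(0,6), by decide, by decide⟩,
    ⟨0, s(1,3), by decide, by decide⟩,
    ⟨1, s(0,4), by decide, by decide⟩]

lemma cyclicP3Path_bijective : Function.Bijective cyclicP3Path := by
  constructor <;> decide

lemma cyclicP3Path_adj_iff (i j : Fin 6) :
    (P3Graph SW).Adj (cyclicP3Path i) (cyclicP3Path j) ↔ (SimpleGraph.cycleGraph 6).Adj i j := by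
  revert i j
  decide

end SW

/-- The `P₃`-graph of the once-subdivided star `K_{1,3}` is isomorphic to the
cycle `C₆`. -/
theorem p3_SW_iso_C6 : Nonempty (P3Graph SW ≃g SimpleGraph.cycleGraph 6) :=
  ⟨(RelIso.mk (Equiv.ofBijective _ SW.cyclicP3Path_bijective)
    (SW.cyclicP3Path_adj_iff _ _)).symm⟩
end

section
/- Let G be a graph and suppose bac and bad are 3-vertex paths of G, where c and d are leaves of G. Then the map on 3-vertex paths of G that swaps the paths cab and dab (i.e., the two paths with middle vertex a and ends b,c and b,d respectively) and fixes all other 3-vertex paths is an automorphism of P_3(G) (a B-swap). -/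
/-- **B-swap.** If `c` and `d` are leaves adjacent to `a` and `b` is another
neighbour of `a`, then the map on 3-vertex paths swapping `cab` and `dab` and
fixing all other paths is an automorphism of `P₃(G)`. -/
theorem b_swap_automorphism {V : Type*} [Fintype V] [DecidableEq V]
    (G : SimpleGraph V) [DecidableRel G.Adj] (a b c d : V)
    (hab : G.Adj a b) (hac : G.Adj a c) (had : G.Adj a d) (hcd : c ≠ d)
    (hc : G.degree c = 1) (hd : G.degree d = 1)
    (p₁ p₂ : P3Path G) (hp₁m : p₁.mid = a) (hp₁e : p₁.ends = s(b, c))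
    (hp₂m : p₂.mid = a) (hp₂e : p₂.ends = s(b, d))
    (f : P3Path G → P3Path G) (hf₁ : f p₁ = p₂) (hf₂ : f p₂ = p₁)
    (hffix : ∀ q, q ≠ p₁ → q ≠ p₂ → f q = q) :
    ∃ e : P3Graph G ≃g P3Graph G, ∀ p, e p = f p := by
  -- no P3Path can have a leaf as its middle vertex
  have hmid : ∀ v : V, G.degree v = 1 → ∀ q : P3Path G, q.mid ≠ v := by
    intro v hv q hq
    obtain ⟨⟨x, y⟩, hrep⟩ := q.ends.exists_rep
    have hxy : x ≠ y := by
      have := q.not_diag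
      rw [← hrep] at this
      simpa using this
    have hx : G.Adj v x := hq ▸ q.adj x (by rw [← hrep]; simp)
    have hy : G.Adj v y := hq ▸ q.adj y (by rw [← hrep]; simp)
    have h2 : 1 < (G.neighborFinset v).card := by
      apply Finset.one_lt_card.mpr
      exact ⟨x, by simpa using hx, y, by simpa using hy, hxy⟩
    rw [← SimpleGraph.degree, hv] at h2
    exact lt_irrefl 1 h2
  have hne : p₁ ≠ p₂ := by
    intro h
    rw [h, hp₂e] at hp₁e
    have hbd : b ≠ d := by
      have := p₂.not_diag; rw [hp₂e] at this; simpa using this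
    rcases Sym2.eq_iff.mp hp₁e with ⟨-, h2⟩ | ⟨h1, h2⟩
    · exact hcd h2.symm
    · exact hbd h2.symm
  have hff : ∀ q, f (f q) = q := by
    intro q
    by_cases h1 : q = p₁
    · rw [h1, hf₁, hf₂]
    by_cases h2 : q = p₂
    · rw [h2, hf₂, hf₁]
    · rw [hffix q h1 h2, hffix q h1 h2]
  -- one-step adjacency transfer
  have hA : ∀ q, (P3Graph G).Adj p₁ q → (P3Graph G).Adj p₂ q := by
    intro q h
    obtain ⟨hne', hq1, hq2⟩ := h
    have hqm : q.mid = b := by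
      rw [hp₁e, Sym2.mem_iff] at hq1
      rcases hq1 with h | h
      · exact h
      · exact absurd h (hmid c hc q)
    refine ⟨?_, ?_, ?_⟩
    · intro h
      rw [← h, hp₂m] at hqm
      exact hab.ne hqm
    · rw [hp₂e, hqm]; simp
    · rw [hp₂m, ← hp₁m]; exact hq2
  have hB : ∀ q, (P3Graph G).Adj p₂ q → (P3Graph G).Adj p₁ q := by
    intro q h
    obtain ⟨hne', hq1, hq2⟩ := h
    have hqm : q.mid = b := by
      rw [hp₂e, Sym2.mem_iff] at hq1
      rcases hq1 with h | h
      · exact h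
      · exact absurd h (hmid d hd q)
    refine ⟨?_, ?_, ?_⟩
    · intro h
      rw [← h, hp₁m] at hqm
      exact hab.ne hqm
    · rw [hp₁e, hqm]; simp
    · rw [hp₁m, ← hp₂m]; exact hq2
  have key : ∀ p q, (P3Graph G).Adj p q → (P3Graph G).Adj (f p) (f q) := by
    intro p q h
    by_cases hp1 : p = p₁
    · rw [hp1] at h ⊢
      rw [hf₁]
      by_cases hq1 : q = p₁
      · exact absurd hq1.symm h.1
      by_cases hq2 : q = p₂
      · rw [hq2] at h ⊢; rw [hf₂]; exact h.symm
      · rw [hffix q hq1 hq2]; exact hA q h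
    by_cases hp2 : p = p₂
    · rw [hp2] at h ⊢
      rw [hf₂]
      by_cases hq1 : q = p₁
      · rw [hq1] at h ⊢; rw [hf₁]; exact h.symm
      by_cases hq2 : q = p₂
      · exact absurd hq2.symm h.1
      · rw [hffix q hq1 hq2]; exact hB q h
    · rw [hffix p hp1 hp2]
      by_cases hq1 : q = p₁
      · rw [hq1] at h ⊢; rw [hf₁]; exact (hA p h.symm).symm
      by_cases hq2 : q = p₂
      · rw [hq2] at h ⊢; rw [hf₂]; exact (hB p h.symm).symm
      · rw [hffix q hq1 hq2]; exact h
  refine ⟨⟨⟨f, f, hff, hff⟩, ?_⟩, fun p => rfl⟩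
  intro p q
  constructor
  · intro h
    have := key (f p) (f q) h
    rwa [hff, hff] at this
  · exact key p q
end

section
/- Let G be a graph containing a 5-vertex path a-b-c-d-e such that deg(a) = deg(e) = 1 and deg(c) = 2 in G. Then the map on 3-vertex paths of G that swaps the paths abc and cde and fixes all other 3-vertex paths is an automorphism of P_3(G) (an S-swap). -/
/-!
Both `abc` and `cde` are adjacent in `P₃(G)` exactly to the 3-vertex paths centred at `c`:
the leaves `a` and `e` cannot be middle vertices, and since `deg c = 2` the only path
centred at `c` is `bcd`, which contains both `b` and `d`. Two vertices with the same
neighbourhood can be swapped by a graph automorphism.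
-/

namespace SimpleGraph

section Swap

variable {W : Type*} [DecidableEq W] (H : SimpleGraph W) {p q : W}

theorem adj_swap_iff_of_adj_iff (h : ∀ r, H.Adj p r ↔ H.Adj q r) (x y : W) :
    H.Adj (Equiv.swap p q x) (Equiv.swap p q y) ↔ H.Adj x y := by
  have hleft : ∀ x y, H.Adj (Equiv.swap p q x) y ↔ H.Adj x y := by
    intro x y
    rcases eq_or_ne x p with rfl | hxp
    · rw [Equiv.swap_apply_left, h]
    rcases eq_or_ne x q with rfl | hxq
    · rw [Equiv.swap_apply_right, h]
    · rw [Equiv.swap_apply_of_ne_of_ne hxp hxq]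
  rw [hleft, H.adj_comm, hleft, H.adj_comm]

def Iso.swapOfAdjIff (h : ∀ r, H.Adj p r ↔ H.Adj q r) : H ≃g H :=
  ⟨Equiv.swap p q, H.adj_swap_iff_of_adj_iff h _ _⟩

end Swap

theorem neighborSet_eq_pair_of_degree_eq_two {V : Type*} {G : SimpleGraph V} {v b d : V}
    [Fintype (G.neighborSet v)] (hv : G.degree v = 2) (hb : G.Adj v b) (hd : G.Adj v d)
    (hbd : b ≠ d) : G.neighborSet v = {b, d} := by
  classical
  have hsub : ({b, d} : Finset V) ⊆ G.neighborFinset v := by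
    simp [Finset.insert_subset_iff, hb, hd]
  have hcard : (G.neighborFinset v).card ≤ ({b, d} : Finset V).card := by
    rw [Finset.card_pair hbd, card_neighborFinset_eq_degree, hv]
  rw [← coe_neighborFinset, ← Finset.eq_of_subset_of_card_le hsub hcard, Finset.coe_pair]

end SimpleGraph

namespace P3Path

variable {V : Type*} {G : SimpleGraph V}

theorem exists_ends_eq (q : P3Path G) :
    ∃ x y, x ≠ y ∧ G.Adj q.mid x ∧ G.Adj q.mid y ∧ q.ends = s(x, y) := by
  obtain ⟨⟨x, y⟩, hxy⟩ := Quot.exists_rep q.ends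
  have hq : q.ends = s(x, y) := hxy.symm
  refine ⟨x, y, ?_, q.adj x (by simp [hq]), q.adj y (by simp [hq]), hq⟩
  simpa [hq] using q.not_diag

theorem mid_ne_of_degree_eq_one (q : P3Path G) {v : V} [Fintype (G.neighborSet v)]
    (hv : G.degree v = 1) : q.mid ≠ v := by
  rintro rfl
  obtain ⟨x, y, hxy, hx, hy, -⟩ := q.exists_ends_eq
  obtain ⟨w, -, huniq⟩ := SimpleGraph.degree_eq_one_iff_existsUnique_adj.mp hv
  exact hxy ((huniq x hx).trans (huniq y hy).symm)

theorem ends_eq_of_neighborSet_eq (q : P3Path G) {b d : V}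
    (hN : G.neighborSet q.mid = {b, d}) : q.ends = s(b, d) := by
  obtain ⟨x, y, hxy, hx, hy, hq⟩ := q.exists_ends_eq
  rw [← G.mem_neighborSet, hN, Set.mem_insert_iff, Set.mem_singleton_iff] at hx hy
  rw [hq]
  rcases hx with rfl | rfl <;> rcases hy with rfl | rfl
  all_goals first | exact absurd rfl hxy | rfl | exact Sym2.eq_swap

end P3Path

theorem P3Graph.adj_iff_of_ends_eq_of_degree_eq_one {V : Type*} {G : SimpleGraph V}
    {p q : P3Path G} {l c : V} [Fintype (G.neighborSet l)] (hl : G.degree l = 1)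
    (hends : p.ends = s(l, c)) (hmid : p.mid ≠ c) :
    (P3Graph G).Adj p q ↔ q.mid = c ∧ p.mid ∈ q.ends := by
  constructor
  · rintro ⟨-, hq, hp⟩
    rw [hends, Sym2.mem_iff] at hq
    exact ⟨hq.resolve_left (q.mid_ne_of_degree_eq_one hl), hp⟩
  · rintro ⟨hq, hp⟩
    exact ⟨fun h => hmid (h ▸ hq), by simp [hends, hq], hp⟩

theorem s_swap_automorphism_general {V : Type*} [Fintype V]
    (G : SimpleGraph V) [DecidableRel G.Adj] (a b c d e : V)
    (hbc : G.Adj b c) (hcd : G.Adj c d)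
    (hdist : [a, b, c, d, e].Nodup)
    (ha : G.degree a = 1) (he : G.degree e = 1) (hc : G.degree c = 2)
    (p₁ p₂ : P3Path G) (hp₁m : p₁.mid = b) (hp₁e : p₁.ends = s(a, c))
    (hp₂m : p₂.mid = d) (hp₂e : p₂.ends = s(c, e))
    (f : P3Path G → P3Path G) (hf₁ : f p₁ = p₂) (hf₂ : f p₂ = p₁)
    (hffix : ∀ q, q ≠ p₁ → q ≠ p₂ → f q = q) :
    ∃ τ : P3Graph G ≃g P3Graph G, ∀ p, τ p = f p := by
  classical
  simp only [List.nodup_cons, List.mem_cons, List.not_mem_nil,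
    or_false, not_or, List.nodup_nil, and_true] at hdist
  obtain ⟨-, ⟨hb_ne_c, hb_ne_d, -⟩, ⟨hc_ne_d, -⟩, -⟩ := hdist
  have hN : G.neighborSet c = {b, d} :=
    SimpleGraph.neighborSet_eq_pair_of_degree_eq_two hc hbc.symm hcd hb_ne_d
  have hcentred : ∀ q : P3Path G, q.mid = c → q.ends = s(b, d) := fun q hq =>
    q.ends_eq_of_neighborSet_eq (hq ▸ hN)
  have hsame : ∀ q, (P3Graph G).Adj p₁ q ↔ (P3Graph G).Adj p₂ q := by
    intro q
    rw [P3Graph.adj_iff_of_ends_eq_of_degree_eq_one ha hp₁e (hp₁m ▸ hb_ne_c),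
      P3Graph.adj_iff_of_ends_eq_of_degree_eq_one he (hp₂e.trans Sym2.eq_swap)
        (hp₂m ▸ Ne.symm hc_ne_d)]
    constructor <;> rintro ⟨hq, -⟩ <;> exact ⟨hq, by simp [hcentred q hq, hp₁m, hp₂m]⟩
  refine ⟨SimpleGraph.Iso.swapOfAdjIff _ hsame, fun p => ?_⟩
  show Equiv.swap p₁ p₂ p = f p
  rcases eq_or_ne p p₁ with rfl | h₁
  · rw [Equiv.swap_apply_left, hf₁]
  rcases eq_or_ne p p₂ with rfl | h₂
  · rw [Equiv.swap_apply_right, hf₂]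
  · rw [Equiv.swap_apply_of_ne_of_ne h₁ h₂, hffix p h₁ h₂]

/-- **S-swap.** If `a-b-c-d-e` is a 5-vertex path with `deg a = deg e = 1` and
`deg c = 2`, then the map on 3-vertex paths swapping `abc` and `cde` and fixing
all other paths is an automorphism of `P₃(G)`. -/
theorem s_swap_automorphism {V : Type*} [Fintype V] [DecidableEq V]
    (G : SimpleGraph V) [DecidableRel G.Adj] (a b c d e : V)
    (hab : G.Adj a b) (hbc : G.Adj b c) (hcd : G.Adj c d) (hde : G.Adj d e)
    (hdist : [a, b, c, d, e].Nodup)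
    (ha : G.degree a = 1) (he : G.degree e = 1) (hc : G.degree c = 2)
    (p₁ p₂ : P3Path G) (hp₁m : p₁.mid = b) (hp₁e : p₁.ends = s(a, c))
    (hp₂m : p₂.mid = d) (hp₂e : p₂.ends = s(c, e))
    (f : P3Path G → P3Path G) (hf₁ : f p₁ = p₂) (hf₂ : f p₂ = p₁)
    (hffix : ∀ q, q ≠ p₁ → q ≠ p₂ → f q = q) :
    ∃ τ : P3Graph G ≃g P3Graph G, ∀ p, τ p = f p :=
  s_swap_automorphism_general G a b c d e hbc hcd hdist ha he hc p₁ p₂ hp₁m hp₁e hp₂m hp₂e f hf₁ hf₂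
    hffix
end

section
/- Let G be a graph containing distinct vertices a, b and distinct vertices c_i, c_j, each of degree 2 in G, with both c_i and c_j adjacent to both a and b (a diamond pair). Then the map on 3-vertex paths of G that swaps the paths c_i a c_j and c_i b c_j and fixes all other 3-vertex paths is an automorphism of P_3(G) (a D-swap). -/
/-!
The paths `p₁ = cᵢ a cⱼ` and `p₂ = cᵢ b cⱼ` are twins in `P₃(G)`. A neighbour of either one is a
path centred at `cᵢ` or `cⱼ`; since these have degree 2 with neighbours `a` and `b`, the only such
path is `a cᵢ b` (resp. `a cⱼ b`), which has both `a` and `b` as ends. The D-swap is the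
transposition of these twins, and transposing twins is an automorphism of any simple graph.
-/

namespace SimpleGraph

variable {V : Type*}

theorem adj_swap_iff_of_neighborSet_eq [DecidableEq V] {H : SimpleGraph V} {u v : V}
    (huv : H.neighborSet u = H.neighborSet v) (x y : V) :
    H.Adj (Equiv.swap u v x) (Equiv.swap u v y) ↔ H.Adj x y := by
  have hN : ∀ w, H.Adj u w ↔ H.Adj v w := fun w => Set.ext_iff.mp huv w
  have hN' : ∀ w, H.Adj w u ↔ H.Adj w v := fun w => by rw [adj_comm, hN, adj_comm]
  simp only [Equiv.swap_apply_def]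
  split_ifs <;> subst_vars <;> grind [adj_comm]

def Iso.swapOfNeighborSetEq [DecidableEq V] {H : SimpleGraph V} {u v : V}
    (huv : H.neighborSet u = H.neighborSet v) : H ≃g H :=
  ⟨Equiv.swap u v, adj_swap_iff_of_neighborSet_eq huv _ _⟩

theorem neighborFinset_eq_pair_of_degree_eq_two [DecidableEq V] {G : SimpleGraph V} {a b c : V}
    [Fintype (G.neighborSet c)] (hab : a ≠ b) (hca : G.Adj c a) (hcb : G.Adj c b)
    (hc : G.degree c = 2) : G.neighborFinset c = {a, b} := by
  refine (Finset.eq_of_subset_of_card_le ?_ ?_).symm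
  · simp [Finset.insert_subset_iff, hca, hcb]
  · rw [Finset.card_pair hab, card_neighborFinset_eq_degree, hc]

theorem neighborSet_subset_pair_of_degree_eq_two {G : SimpleGraph V} {a b c : V}
    [Fintype (G.neighborSet c)] (hab : a ≠ b) (hca : G.Adj c a) (hcb : G.Adj c b)
    (hc : G.degree c = 2) : G.neighborSet c ⊆ {a, b} := by
  classical
  intro x hx
  simpa [neighborFinset_eq_pair_of_degree_eq_two hab hca hcb hc] using
    (G.mem_neighborFinset c x).mpr hx

end SimpleGraph

namespace P3Path

variable {V : Type*} {G : SimpleGraph V}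

theorem mid_notMem_ends (p : P3Path G) : p.mid ∉ p.ends :=
  fun h => G.loopless.irrefl _ (p.adj _ h)

theorem ends_eq_of_neighborSet_subset {a b : V} (p : P3Path G)
    (h : G.neighborSet p.mid ⊆ {a, b}) : p.ends = s(a, b) := by
  obtain ⟨m, e, hd, hadj⟩ := p
  induction e using Sym2.ind with
  | _ x y =>
    have hx : x = a ∨ x = b := h (hadj x (Sym2.mem_mk_left x y))
    have hy : y = a ∨ y = b := h (hadj y (Sym2.mem_mk_right x y))
    have hxy : x ≠ y := by simpa using hd
    rcases hx with rfl | rfl <;> rcases hy with rfl | rfl <;> simp_all [Sym2.eq_swap]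

end P3Path

namespace P3Graph

variable {V : Type*} {G : SimpleGraph V}

theorem adj_iff {p q : P3Path G} : (P3Graph G).Adj p q ↔ q.mid ∈ p.ends ∧ p.mid ∈ q.ends :=
  ⟨fun h => h.2, fun h => ⟨fun hpq => p.mid_notMem_ends (hpq ▸ h.1), h⟩⟩

theorem neighborSet_eq_of_ends_eq {p q : P3Path G} (hends : p.ends = q.ends)
    (hcentred : ∀ r : P3Path G, r.mid ∈ p.ends → r.ends = s(p.mid, q.mid)) :
    (P3Graph G).neighborSet p = (P3Graph G).neighborSet q := by
  ext r
  simp only [SimpleGraph.mem_neighborSet, adj_iff, ← hends]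
  constructor <;> rintro ⟨hr, -⟩ <;> simp [hr, hcentred r hr]

end P3Graph

theorem d_swap_automorphism_general {V : Type*} [Fintype V]
    (G : SimpleGraph V) [DecidableRel G.Adj] (a b ci cj : V)
    (hab : a ≠ b)
    (hia : G.Adj ci a) (hib : G.Adj ci b) (hja : G.Adj cj a) (hjb : G.Adj cj b)
    (hi : G.degree ci = 2) (hj : G.degree cj = 2)
    (p₁ p₂ : P3Path G) (hp₁m : p₁.mid = a) (hp₁e : p₁.ends = s(ci, cj))
    (hp₂m : p₂.mid = b) (hp₂e : p₂.ends = s(ci, cj))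
    (f : P3Path G → P3Path G) (hf₁ : f p₁ = p₂) (hf₂ : f p₂ = p₁)
    (hffix : ∀ q, q ≠ p₁ → q ≠ p₂ → f q = q) :
    ∃ τ : P3Graph G ≃g P3Graph G, ∀ p, τ p = f p := by
  classical
  have hcentred : ∀ r : P3Path G, r.mid ∈ p₁.ends → r.ends = s(p₁.mid, p₂.mid) := by
    intro r hr
    rw [hp₁e, Sym2.mem_iff] at hr
    rw [hp₁m, hp₂m]
    apply r.ends_eq_of_neighborSet_subset
    rcases hr with hr | hr <;> rw [hr]
    exacts [G.neighborSet_subset_pair_of_degree_eq_two hab hia hib hi,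
      G.neighborSet_subset_pair_of_degree_eq_two hab hja hjb hj]
  have htwins := P3Graph.neighborSet_eq_of_ends_eq (hp₁e.trans hp₂e.symm) hcentred
  refine ⟨SimpleGraph.Iso.swapOfNeighborSetEq htwins, fun p => ?_⟩
  change Equiv.swap p₁ p₂ p = f p
  rw [Equiv.swap_apply_def]
  split_ifs with h₁ h₂
  · rw [h₁, hf₁]
  · rw [h₂, hf₂]
  · rw [hffix p h₁ h₂]

/-- **D-swap.** If `cᵢ, cⱼ` are distinct vertices of degree 2, both adjacent to
the distinct vertices `a` and `b` (a diamond pair), then the map on 3-vertex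
paths swapping `cᵢ a cⱼ` and `cᵢ b cⱼ` and fixing all other paths is an
automorphism of `P₃(G)`. -/
theorem d_swap_automorphism {V : Type*} [Fintype V] [DecidableEq V]
    (G : SimpleGraph V) [DecidableRel G.Adj] (a b ci cj : V)
    (hab : a ≠ b) (hij : ci ≠ cj)
    (hia : G.Adj ci a) (hib : G.Adj ci b) (hja : G.Adj cj a) (hjb : G.Adj cj b)
    (hi : G.degree ci = 2) (hj : G.degree cj = 2)
    (p₁ p₂ : P3Path G) (hp₁m : p₁.mid = a) (hp₁e : p₁.ends = s(ci, cj))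
    (hp₂m : p₂.mid = b) (hp₂e : p₂.ends = s(ci, cj))
    (f : P3Path G → P3Path G) (hf₁ : f p₁ = p₂) (hf₂ : f p₂ = p₁)
    (hffix : ∀ q, q ≠ p₁ → q ≠ p₂ → f q = q) :
    ∃ τ : P3Graph G ≃g P3Graph G, ∀ p, τ p = f p :=
  d_swap_automorphism_general G a b ci cj hab hia hib hja hjb hi hj p₁ p₂ hp₁m hp₁e hp₂m hp₂e f hf₁
    hf₂ hffix
end
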